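/- The number of semi-standard Young tableaux of stretched shape kμ/kν with entries in {1,...,n} is a polynomial function of the positive integer k. -/

import Mathlib

open scoped BigOperators

/-- A partition: a weakly decreasing sequence of naturals that is eventually zero. -/
def IsPartition (f : ℕ → ℕ) : Prop :=
  (∀ i j, i ≤ j → f j ≤ f i) ∧ ∃ N, ∀ i, N ≤ i → f i = 0

/-- Data of a (skew) filling with entries bounded by `n`: the inner shape `inner`, and for
each row the weakly increasing list of its entries.  The outer shape of the filling is
`inner i + (row i).length`, so skew boxes sit to the left of all entries of a row. -/
structure SkewTab (n : ℕ) where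
  inner : ℕ → ℕ
  row : ℕ → List ℕ

namespace SkewTab

variable {n : ℕ}

/-- The outer shape. -/
def outer (T : SkewTab n) : ℕ → ℕ := fun i => T.inner i + (T.row i).length

/-- The entry in row `i`, column `j` (0-indexed); meaningful for `inner i ≤ j < outer i`. -/
def entry (T : SkewTab n) (i j : ℕ) : ℕ := (T.row i).getD (j - T.inner i) 0

/-- `T` is a semistandard Young tableau of skew shape `outer/inner` with entries in
`{1,…,n}`: both shapes are partitions, rows are weakly increasing and columns are
strictly increasing. -/
def IsSSYT (T : SkewTab n) : Prop :=
  IsPartition T.inner ∧ IsPartition T.outer ∧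
  (∀ i, (T.row i).Pairwise (· ≤ ·)) ∧
  (∀ i, ∀ x ∈ T.row i, 1 ≤ x ∧ x ≤ n) ∧
  (∀ i j, T.inner i ≤ j → j < T.outer i → T.inner (i+1) ≤ j → j < T.outer (i+1) →
    T.entry i j < T.entry (i+1) j)

/-- Tableau insertion `T1 ⊠ T2`: concatenate corresponding rows and sort each row
weakly increasingly; the skew boxes (inner shapes) add up and are pushed to the left,
i.e. treated as smaller than all numbered entries. -/
def ins (T1 T2 : SkewTab n) : SkewTab n where
  inner := fun i => T1.inner i + T2.inner i
  row := fun i => (T1.row i ++ T2.row i).mergeSort (fun a b => decide (a ≤ b))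

/-- The empty tableau. -/
def empty : SkewTab n := ⟨fun _ => 0, fun _ => []⟩

/-- The weight of `T`: `wt T k` is the number of boxes with entry `k`. -/
noncomputable def wt (T : SkewTab n) (k : ℕ) : ℕ := ∑ᶠ i, (T.row i).count k

/-- The `c`-th column of `T` (0-indexed), viewed as a single-column skew tableau
(keeping its skew boxes). -/
def col (T : SkewTab n) (c : ℕ) : SkewTab n where
  inner := fun i => if c < T.inner i then 1 else 0
  row := fun i =>
    if T.inner i ≤ c ∧ c < T.outer i then [(T.row i).getD (c - T.inner i) 0] else []

end SkewTab

/-- The set of SSYTs of shape `mu/nu` with entries in `{1,…,n}`. -/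
def Tabs (n : ℕ) (mu nu : ℕ → ℕ) : Set (SkewTab n) :=
  {T | T.IsSSYT ∧ T.inner = nu ∧ T.outer = mu}

/-- The monomial `x^w = x₁^{w₁} ⋯ xₙ^{wₙ}`. -/
noncomputable def xpow (n : ℕ) (w : Fin n → ℕ) : MvPolynomial (Fin n) ℤ :=
  ∏ k : Fin n, MvPolynomial.X k ^ w k

/-- The monomial `x^{w(T)}` attached to a tableau `T` (variable `x_k` corresponds to
the entry `k ∈ {1,…,n}`). -/
noncomputable def xwt {n : ℕ} (T : SkewTab n) : MvPolynomial (Fin n) ℤ :=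
  xpow n (fun k => T.wt ((k : ℕ) + 1))

/-- The skew Schur polynomial `s_{mu/nu}(x₁,…,xₙ) = Σ_T x^{w(T)}`. -/
noncomputable def schur (n : ℕ) (mu nu : ℕ → ℕ) : MvPolynomial (Fin n) ℤ :=
  ∑ᶠ T ∈ Tabs n mu nu, xwt T

/-- The Kostka number `K_{lam/mu,w}`: the number of SSYTs of shape `lam/mu` with
entries in `{1,…,n}` and weight `w`. -/
noncomputable def kostka (n : ℕ) (lam mu : ℕ → ℕ) (w : Fin n → ℕ) : ℕ :=
  Nat.card {T : SkewTab n // T ∈ Tabs n lam mu ∧ ∀ k : Fin n, T.wt ((k : ℕ) + 1) = w k}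

/-- The monomial symmetric polynomial `m_w`: the sum of `x^u` over the distinct
rearrangements `u` of `w`. -/
noncomputable def mSym (n : ℕ) (w : Fin n → ℕ) : MvPolynomial (Fin n) ℤ :=
  ∑ᶠ u ∈ {u : Fin n → ℕ | ∃ σ : Equiv.Perm (Fin n), u = w ∘ σ}, xpow n u

/-- The characteristic polynomial `χ(t) = ∏_{T ∈ T^n_{mu/nu}} (t − x^{w(T)})`. -/
noncomputable def charPoly (n : ℕ) (mu nu : ℕ → ℕ) : Polynomial (MvPolynomial (Fin n) ℤ) :=
  ∏ᶠ T ∈ Tabs n mu nu, (Polynomial.X - Polynomial.C (xwt T))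

/-- `mu/nu` sits inside `alpha/beta`: there is an injection `f` of column positions such
that for every row, column `j` of `mu/nu` has a cell (resp. a skew box) exactly when
column `f j` of `alpha/beta` does; i.e. every column of the diagram of `mu/nu` can be
found among the columns of the diagram of `alpha/beta`, counting multiplicities. -/
def SitsInside (mu nu alpha beta : ℕ → ℕ) : Prop :=
  ∃ f : ℕ → ℕ, Function.Injective f ∧
    ∀ j i, ((nu i ≤ j ∧ j < mu i) ↔ (beta i ≤ f j ∧ f j < alpha i)) ∧
      (j < nu i ↔ f j < beta i)

/-!
Record a tableau of shape `kμ/kν` by its Gelfand–Tsetlin pattern: `g (t, i)` counts the boxes of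
row `i` that are skew or hold an entry `≤ t`. Column strictness becomes interlacing of
consecutive rows, so the tableaux are the lattice points of the `k`-th dilate of a polytope cut
out by inequalities `x u ≤ x v` and `x u = c` with integers `c ≤ M`. Sort the values of such a
point together with the pins `0, k, …, kM`: the resulting rank pattern ranges over a finite set
independent of `k`, and the points with a given pattern correspond to choosing, for each `t < M`,
a fixed number `m_t` of values strictly between `kt` and `k(t + 1)`. Hence their number is
`∑ ∏ₜ (k - 1).choose m_t`, a polynomial in `k`.
-/

open Finset Relation Polynomial

def iooLists (g a b : ℕ) : Set (List ℕ) :=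
  {l | l.SortedLT ∧ l.length = g ∧ ∀ x ∈ l, a < x ∧ x < b}

lemma card_iooLists (g a b : ℕ) : Nat.card (iooLists g a b) = (b - a - 1).choose g := by
  let e : iooLists g a b ≃ powersetCard g (Ioo a b) :=
    { toFun := fun l => ⟨l.1.toFinset, mem_powersetCard.2
        ⟨fun x hx => mem_Ioo.2 (l.2.2.2 x (List.mem_toFinset.1 hx)),
          by rw [List.toFinset_card_of_nodup l.2.1.nodup, l.2.2.1]⟩⟩
      invFun := fun s => ⟨s.1.sort, sortedLT_sort _,
        by rw [length_sort, (mem_powersetCard.1 s.2).2],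
        fun x hx => mem_Ioo.1 ((mem_powersetCard.1 s.2).1 (mem_sort _ |>.1 hx))⟩
      left_inv := fun l => Subtype.ext <|
        (List.toFinset_sort _ l.2.1.nodup).2 (l.2.1.pairwise.imp le_of_lt)
      right_inv := fun s => Subtype.ext (sort_toFinset _ _) }
  rw [Nat.card_congr e, Nat.card_eq_fintype_card, Fintype.card_coe, card_powersetCard,
    Nat.card_Ioo]

def pinnedLists {r : ℕ} (J a : Fin (r + 1) → ℕ) : Set (List ℕ) :=
  {l | l.SortedLT ∧ l.length = J (Fin.last r) + 1 ∧ ∀ t, l[J t]? = some (a t)}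

lemma pinnedLists_fin_one (J a : Fin 1 → ℕ) (hJ : J 0 = 0) : pinnedLists J a = {[a 0]} := by
  ext l
  constructor
  · rintro ⟨-, hlen, hpin⟩
    have h0 := hpin 0
    rw [Fin.last_zero, hJ] at hlen
    rw [hJ] at h0
    match l, hlen with
    | [x], _ => simpa using h0
  · rintro rfl
    refine ⟨by simp [List.sortedLT_iff_pairwise], by simp [hJ], fun t => ?_⟩
    rw [Fin.fin_one_eq_zero t, hJ]
    rfl

lemma List.SortedLT.le_of_getElem?_eq {l : List ℕ} (hl : l.SortedLT) {p z : ℕ}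
    (hlen : l.length = p + 1) (hp : l[p]? = some z) {x : ℕ} (hx : x ∈ l) : x ≤ z := by
  obtain ⟨i, hi, rfl⟩ := List.mem_iff_getElem.1 hx
  obtain ⟨hp', rfl⟩ := List.getElem?_eq_some_iff.1 hp
  exact (hl.getElem_le_getElem_iff).2 (by omega)

section Snoc

variable {r : ℕ} {J a : Fin (r + 2) → ℕ}

lemma append_mem_pinnedLists (hJ : StrictMono J) (ha : StrictMono a) {l₁ l₂ : List ℕ}
    (h₁ : l₁ ∈ pinnedLists (J ∘ Fin.castSucc) (a ∘ Fin.castSucc))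
    (h₂ : l₂ ∈ iooLists (J (Fin.last _) - J (Fin.last r).castSucc - 1)
      (a (Fin.last r).castSucc) (a (Fin.last _))) :
    l₁ ++ l₂ ++ [a (Fin.last _)] ∈ pinnedLists J a := by
  obtain ⟨hs₁, hlen₁, hpin₁⟩ := h₁
  obtain ⟨hs₂, hlen₂, hmem₂⟩ := h₂
  have hlt : J (Fin.last r).castSucc < J (Fin.last _) := hJ (Fin.castSucc_lt_last _)
  have hle₁ : ∀ x ∈ l₁, x ≤ a (Fin.last r).castSucc :=
    fun x hx => hs₁.le_of_getElem?_eq hlen₁ (hpin₁ (Fin.last r)) hx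
  have hlen₁₂ : (l₁ ++ l₂).length = J (Fin.last _) := by
    simp only [List.length_append, hlen₁, hlen₂, Function.comp_apply]
    omega
  refine ⟨?_, ?_, Fin.lastCases ?_ fun t => ?_⟩
  · simp only [List.sortedLT_iff_pairwise, List.pairwise_append, List.mem_append,
      List.mem_singleton, List.pairwise_singleton] at hs₁ hs₂ ⊢
    refine ⟨⟨hs₁, hs₂, fun x hx y hy => (hle₁ x hx).trans_lt (hmem₂ y hy).1⟩, trivial,
      ?_⟩
    rintro x (hx | hx) y rfl
    · exact (hle₁ x hx).trans_lt (ha (Fin.castSucc_lt_last _))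
    · exact (hmem₂ x hx).2
  · rw [List.length_append, List.length_singleton, hlen₁₂]
  · rw [← hlen₁₂, List.getElem?_concat_length]
  · have : J t.castSucc < l₁.length := by
      rw [hlen₁]
      exact Nat.lt_succ_of_le (hJ.monotone (Fin.castSucc_le_castSucc_iff.2 (Fin.le_last t)))
    rw [List.append_assoc, List.getElem?_append_left this]
    exact hpin₁ t

lemma exists_append_of_mem_pinnedLists {l : List ℕ} (hJ : StrictMono J)
    (hl : l ∈ pinnedLists J a) :
    ∃ l₁ l₂, l = l₁ ++ l₂ ++ [a (Fin.last _)] ∧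
      l₁ ∈ pinnedLists (J ∘ Fin.castSucc) (a ∘ Fin.castSucc) ∧
      l₂ ∈ iooLists (J (Fin.last _) - J (Fin.last r).castSucc - 1)
        (a (Fin.last r).castSucc) (a (Fin.last _)) := by
  obtain ⟨hs, hlen, hpin⟩ := hl
  have hlt : J (Fin.last r).castSucc < J (Fin.last _) := hJ (Fin.castSucc_lt_last _)
  have hne : l ≠ [] := List.ne_nil_of_length_pos (by omega)
  have hlast : l.getLast hne = a (Fin.last _) := by
    rw [List.getLast_eq_getElem, ← Option.some_inj, ← List.getElem?_eq_getElem, ← hpin]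
    simp [hlen]
  set l₁ := l.dropLast.take (J (Fin.last r).castSucc + 1)
  set l₂ := l.dropLast.drop (J (Fin.last r).castSucc + 1)
  have hsplit : l = l₁ ++ l₂ ++ [a (Fin.last _)] := by
    rw [List.take_append_drop, ← hlast, List.dropLast_append_getLast]
  have hlen₁ : l₁.length = J (Fin.last r).castSucc + 1 := by
    simp only [l₁, List.length_take, List.length_dropLast, hlen]
    omega
  have hpin₁ : ∀ t, l₁[J (Fin.castSucc t)]? = some (a t.castSucc) := fun t => by
    have : J t.castSucc < l₁.length := by
      rw [hlen₁]
      exact Nat.lt_succ_of_le (hJ.monotone (Fin.castSucc_le_castSucc_iff.2 (Fin.le_last t)))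
    rw [← hpin, hsplit, List.append_assoc, List.getElem?_append_left this]
  rw [hsplit, List.sortedLT_iff_pairwise] at hs
  simp only [List.pairwise_append, List.mem_append, List.mem_singleton] at hs
  obtain ⟨⟨hs₁, hs₂, h₁₂⟩, -, h₃⟩ := hs
  have hz₁ : a (Fin.last r).castSucc ∈ l₁ :=
    List.mem_of_getElem? (hpin₁ (Fin.last r))
  refine ⟨l₁, l₂, hsplit, ⟨hs₁.sortedLT, hlen₁, hpin₁⟩, hs₂.sortedLT, ?_,
    fun y hy => ⟨h₁₂ _ hz₁ y hy, h₃ y (Or.inr hy) _ rfl⟩⟩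
  have := congrArg List.length hsplit
  simp only [List.length_append, List.length_singleton, hlen, hlen₁] at this
  omega

noncomputable def pinnedListsEquiv (hJ : StrictMono J) (ha : StrictMono a) :
    pinnedLists (J ∘ Fin.castSucc) (a ∘ Fin.castSucc) ×
        iooLists (J (Fin.last _) - J (Fin.last r).castSucc - 1)
          (a (Fin.last r).castSucc) (a (Fin.last _)) ≃ pinnedLists J a :=
  Equiv.ofBijective (fun l => ⟨l.1.1 ++ l.2.1 ++ [a (Fin.last _)],
      append_mem_pinnedLists hJ ha l.1.2 l.2.2⟩) <| by
    refine ⟨fun l l' h => ?_, fun l => ?_⟩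
    · have h := List.append_cancel_right (Subtype.ext_iff.1 h)
      obtain ⟨h₁, h₂⟩ := List.append_inj h (l.1.2.2.1.trans l'.1.2.2.1.symm)
      exact Prod.ext (Subtype.ext h₁) (Subtype.ext h₂)
    · obtain ⟨l₁, l₂, hl, h₁, h₂⟩ := exists_append_of_mem_pinnedLists hJ l.2
      exact ⟨(⟨l₁, h₁⟩, ⟨l₂, h₂⟩), Subtype.ext hl.symm⟩

end Snoc

theorem card_pinnedLists {r : ℕ} (J a : Fin (r + 1) → ℕ) (hJ : StrictMono J) (hJ0 : J 0 = 0)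
    (ha : StrictMono a) :
    Nat.card (pinnedLists J a) =
      ∏ t : Fin r, (a t.succ - a t.castSucc - 1).choose (J t.succ - J t.castSucc - 1) := by
  induction r with
  | zero => simp [pinnedLists_fin_one _ _ hJ0]
  | succ r ih =>
    rw [← Nat.card_congr (pinnedListsEquiv hJ ha), Nat.card_prod,
      ih _ _ (hJ.comp (Fin.strictMono_castSucc)) hJ0 (ha.comp Fin.strictMono_castSucc),
      card_iooLists, Fin.prod_univ_castSucc, Fin.succ_last]
    rfl

section ValueRank

variable {α : Type*} [Fintype α]

def sortedValues (y : α → ℕ) : List ℕ := (univ.image y).sort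

def valueRank (y : α → ℕ) (a : α) : ℕ := (sortedValues y).idxOf (y a)

variable {y : α → ℕ}

lemma sortedLT_sortedValues (y : α → ℕ) : (sortedValues y).SortedLT := sortedLT_sort _

lemma mem_sortedValues {v : ℕ} : v ∈ sortedValues y ↔ ∃ a, y a = v := by
  simp [sortedValues]

lemma length_sortedValues_le : (sortedValues y).length ≤ Fintype.card α := by
  rw [sortedValues, length_sort]
  exact card_image_le

lemma valueRank_lt_length (a : α) : valueRank y a < (sortedValues y).length :=
  List.idxOf_lt_length_iff.2 (mem_sortedValues.2 ⟨a, rfl⟩)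

lemma getElem_sortedValues_valueRank (a : α) :
    (sortedValues y)[valueRank y a]'(valueRank_lt_length a) = y a :=
  List.getElem_idxOf _

lemma valueRank_le_valueRank_iff {a b : α} : valueRank y a ≤ valueRank y b ↔ y a ≤ y b := by
  conv_rhs => rw [← getElem_sortedValues_valueRank (y := y) a,
    ← getElem_sortedValues_valueRank (y := y) b]
  exact (sortedLT_sortedValues y).getElem_le_getElem_iff.symm

lemma valueRank_lt_valueRank_iff {a b : α} : valueRank y a < valueRank y b ↔ y a < y b := by
  simpa only [not_le] using valueRank_le_valueRank_iff.not

lemma exists_valueRank_eq {i : ℕ} (hi : i < (sortedValues y).length) :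
    ∃ a, valueRank y a = i := by
  obtain ⟨a, ha⟩ := mem_sortedValues.1 (List.getElem_mem hi)
  exact ⟨a, by rw [valueRank, ha, (sortedLT_sortedValues y).nodup.idxOf_getElem]⟩

lemma range_valueRank : Set.range (valueRank y) = Set.Iio (sortedValues y).length := by
  ext i
  exact ⟨fun ⟨a, ha⟩ => ha ▸ valueRank_lt_length a, exists_valueRank_eq⟩

lemma sortedValues_getD_comp {l : List ℕ} (hl : l.SortedLT) {f : α → ℕ}
    (hf : Set.range f = Set.Iio l.length) : sortedValues (fun a => l.getD (f a) 0) = l := by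
  have hvals : univ.image (fun a => l.getD (f a) 0) = l.toFinset := by
    ext v
    simp only [mem_image, mem_univ, true_and, List.mem_toFinset, List.mem_iff_getElem]
    constructor
    · rintro ⟨a, rfl⟩
      have ha : f a < l.length := Set.mem_Iio.1 (hf ▸ Set.mem_range_self a)
      exact ⟨f a, ha, (List.getD_eq_getElem _ _ ha).symm⟩
    · rintro ⟨i, hi, rfl⟩
      obtain ⟨a, rfl⟩ := hf.symm ▸ (Set.mem_Iio.2 hi : i ∈ Set.Iio l.length)
      exact ⟨a, List.getD_eq_getElem _ _ hi⟩
  rw [sortedValues, hvals]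
  exact (List.toFinset_sort _ hl.nodup).2 (hl.pairwise.imp le_of_lt)

lemma valueRank_getD_comp {l : List ℕ} (hl : l.SortedLT) {f : α → ℕ}
    (hf : Set.range f = Set.Iio l.length) : valueRank (fun a => l.getD (f a) 0) = f := by
  funext a
  have ha : f a < l.length := Set.mem_Iio.1 (hf ▸ Set.mem_range_self a)
  rw [valueRank, sortedValues_getD_comp hl hf, List.getD_eq_getElem _ _ ha,
    hl.nodup.idxOf_getElem]

end ValueRank

lemma le_of_reflTransGen {α β : Type*} [Preorder β] {R : α → α → Prop} {g : α → β}
    (hg : ∀ a b, R a b → g a ≤ g b) {a b : α} (h : ReflTransGen R a b) : g a ≤ g b := by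
  induction h with
  | refl => exact le_rfl
  | tail _ hbc ih => exact ih.trans (hg _ _ hbc)

noncomputable def choosePredPoly (g : ℕ) : ℚ[X] :=
  C (g.factorial : ℚ)⁻¹ * (descPochhammer ℚ g).comp (X - 1)

lemma eval_choosePredPoly (g : ℕ) {k : ℕ} (hk : 0 < k) :
    (choosePredPoly g).eval (k : ℚ) = ((k - 1).choose g : ℚ) := by
  rw [choosePredPoly, eval_mul, eval_C, eval_comp, eval_sub, eval_X, eval_one,
    ← Nat.cast_pred hk, Nat.cast_choose_eq_descPochhammer_div, inv_mul_eq_div]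

section OrderSolutions

variable {V : Type*} {M : ℕ}

def withPins (k : ℕ) (x : V → ℕ) : V ⊕ Fin (M + 1) → ℕ := Sum.elim x fun p => k * p

/-- The lattice points of the `k`-th dilate of the polytope given by the inequalities `a ≤ b`
for `R a b`, where a pin `p : Fin (M + 1)` stands for the constant `p`. -/
def orderSolutions (R : V ⊕ Fin (M + 1) → V ⊕ Fin (M + 1) → Prop) (k : ℕ) :
    Set (V → ℕ) :=
  {x | ∀ a b, R a b → withPins k x a ≤ withPins k x b}

/-- The rank patterns `valueRank (withPins k x)` of the solutions `x`, for any `k > 0`. -/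
structure IsRankPattern (R : V ⊕ Fin (M + 1) → V ⊕ Fin (M + 1) → Prop)
    (f : V ⊕ Fin (M + 1) → ℕ) : Prop where
  le_of_rel : ∀ a b, R a b → f a ≤ f b
  strictMono_pin : StrictMono fun p => f (.inr p)
  pin_zero : f (.inr 0) = 0
  range_eq : Set.range f = Set.Iio (f (.inr (Fin.last M)) + 1)

def orderSolutionsWithRank [Fintype V] (R : V ⊕ Fin (M + 1) → V ⊕ Fin (M + 1) → Prop)
    (k : ℕ) (f : V ⊕ Fin (M + 1) → ℕ) : Set (V → ℕ) :=
  {x | x ∈ orderSolutions R k ∧ valueRank (withPins k x) = f}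

variable {R : V ⊕ Fin (M + 1) → V ⊕ Fin (M + 1) → Prop} {k : ℕ} {x : V → ℕ}

lemma withPins_le_last (hR : ∀ v, ∃ p, ReflTransGen R (.inl v) (.inr p))
    (hx : x ∈ orderSolutions R k) (a : V ⊕ Fin (M + 1)) :
    withPins k x a ≤ k * M := by
  have hpin (p : Fin (M + 1)) : k * p ≤ k * M := Nat.mul_le_mul_left k (Fin.is_le p)
  cases a with
  | inl v =>
    obtain ⟨p, hp⟩ := hR v
    exact (le_of_reflTransGen hx hp).trans (hpin p)
  | inr p => exact hpin p

lemma orderSolutions_finite [Finite V] (hR : ∀ v, ∃ p, ReflTransGen R (.inl v) (.inr p))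
    (k : ℕ) : (orderSolutions R k).Finite :=
  (Set.Finite.pi fun _ => Set.finite_Iic (k * M)).subset fun _ hx v _ =>
    withPins_le_last hR hx (.inl v)

lemma withPins_getD {l : List ℕ} {f : V ⊕ Fin (M + 1) → ℕ}
    (hpin : ∀ p : Fin (M + 1), l[f (.inr p)]? = some (k * p)) :
    withPins k (fun v => l.getD (f (.inl v)) 0) = fun a => l.getD (f a) 0 := by
  funext a
  cases a with
  | inl v => rfl
  | inr p => simp [withPins, List.getD_eq_getElem?_getD, hpin p]

variable [Fintype V]

lemma isRankPattern_valueRank (hR : ∀ v, ∃ p, ReflTransGen R (.inl v) (.inr p)) (hk : 0 < k)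
    (hx : x ∈ orderSolutions R k) : IsRankPattern R (valueRank (withPins k x)) := by
  have hlen : 0 < (sortedValues (withPins (M := M) k x)).length :=
    (Nat.zero_le _).trans_lt (valueRank_lt_length (Sum.inr 0))
  refine ⟨fun a b hab => valueRank_le_valueRank_iff.2 (hx a b hab), fun p q hpq => ?_, ?_, ?_⟩
  · exact valueRank_lt_valueRank_iff.2 (Nat.mul_lt_mul_of_pos_left hpq hk)
  · obtain ⟨b, hb⟩ := exists_valueRank_eq hlen
    have : valueRank (withPins k x) (.inr 0) ≤ valueRank (withPins k x) b :=
      valueRank_le_valueRank_iff.2 (by simp [withPins])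
    omega
  · ext i
    simp only [Set.mem_range, Set.mem_Iio]
    constructor
    · rintro ⟨a, rfl⟩
      exact Nat.lt_succ_of_le (valueRank_le_valueRank_iff.2 (withPins_le_last hR hx a))
    · intro hi
      exact exists_valueRank_eq (hi.trans_le (valueRank_lt_length _))

/-- A solution with rank pattern `f` is its list of distinct values read along `f`. -/
def orderSolutionsWithRankEquiv {f : V ⊕ Fin (M + 1) → ℕ} (hf : IsRankPattern R f) :
    orderSolutionsWithRank R k f ≃ pinnedLists (fun p => f (.inr p)) (fun p => k * p) where
  toFun x := ⟨sortedValues (withPins k x.1), by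
    obtain ⟨x, -, rfl⟩ := x
    refine ⟨sortedLT_sortedValues _, ?_, fun p => ?_⟩
    · rw [← Set.Iio_inj, ← range_valueRank, hf.range_eq]
    · rw [List.getElem?_eq_getElem (valueRank_lt_length _), getElem_sortedValues_valueRank]
      rfl⟩
  invFun l := ⟨fun v => l.1.getD (f (.inl v)) 0, by
    obtain ⟨hl, hlen, hpin⟩ := l.2
    have hf' : Set.range f = Set.Iio l.1.length := hlen ▸ hf.range_eq
    have hvals := withPins_getD hpin
    refine ⟨fun a b hab => ?_, by rw [hvals, valueRank_getD_comp hl hf']⟩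
    have hb : f b < l.1.length := Set.mem_Iio.1 (hf' ▸ Set.mem_range_self b)
    simp only [hvals]
    rw [List.getD_eq_getElem _ _ hb, List.getD_eq_getElem _ _ ((hf.le_of_rel a b hab).trans_lt hb)]
    exact hl.getElem_le_getElem_iff.2 (hf.le_of_rel a b hab)⟩
  left_inv x := by
    obtain ⟨x, -, hrank⟩ := x
    subst hrank
    ext v
    simp only
    rw [List.getD_eq_getElem _ _ (valueRank_lt_length _), getElem_sortedValues_valueRank]
    rfl
  right_inv l := by
    obtain ⟨l, hl, hlen, hpin⟩ := l
    exact Subtype.ext <| (congrArg sortedValues (withPins_getD hpin)).trans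
      (sortedValues_getD_comp hl (hlen ▸ hf.range_eq))

open Classical in
lemma card_orderSolutionsWithRank (hR : ∀ v, ∃ p, ReflTransGen R (.inl v) (.inr p))
    (hk : 0 < k) (f : V ⊕ Fin (M + 1) → ℕ) :
    Nat.card (orderSolutionsWithRank R k f) = if IsRankPattern R f then
      ∏ t : Fin M, (k - 1).choose (f (.inr t.succ) - f (.inr t.castSucc) - 1) else 0 := by
  split_ifs with hf
  · rw [Nat.card_congr (orderSolutionsWithRankEquiv hf),
      card_pinnedLists _ _ hf.strictMono_pin hf.pin_zero
        fun p q hpq => Nat.mul_lt_mul_of_pos_left hpq hk]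
    refine prod_congr rfl fun t _ => ?_
    rw [Fin.val_succ, Fin.val_castSucc, Nat.mul_succ, Nat.add_sub_cancel_left]
  · have : IsEmpty (orderSolutionsWithRank R k f) :=
      ⟨fun ⟨x, hx, hrank⟩ => hf (hrank ▸ isRankPattern_valueRank hR hk hx)⟩
    exact Nat.card_of_isEmpty

lemma card_orderSolutions_eq_sum [DecidableEq V]
    (hR : ∀ v, ∃ p, ReflTransGen R (.inl v) (.inr p)) (k : ℕ) :
    Nat.card (orderSolutions R k) =
      ∑ f : V ⊕ Fin (M + 1) → Fin (Fintype.card (V ⊕ Fin (M + 1))),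
        Nat.card (orderSolutionsWithRank R k (Fin.val ∘ f)) := by
  have := (orderSolutions_finite hR k).to_subtype
  have (f : V ⊕ Fin (M + 1) → ℕ) : Finite (orderSolutionsWithRank R k f) :=
    Finite.Set.subset _ fun x hx => hx.1
  rw [← Nat.card_sigma]
  refine Nat.card_congr
    { toFun := fun x => ⟨fun a => ⟨valueRank (withPins k x.1) a,
        (valueRank_lt_length a).trans_le length_sortedValues_le⟩, x.1, x.2, rfl⟩
      invFun := fun x => ⟨x.2.1, x.2.2.1⟩
      left_inv := fun x => rfl
      right_inv := ?_ }
  rintro ⟨f, x, hx, hrank⟩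
  refine Sigma.subtype_ext (funext fun a => Fin.ext ?_) rfl
  exact congrFun hrank a

theorem exists_polynomial_card_orderSolutions
    (hR : ∀ v, ∃ p, ReflTransGen R (.inl v) (.inr p)) :
    ∃ P : ℚ[X], ∀ k, 0 < k → (Nat.card (orderSolutions R k) : ℚ) = P.eval (k : ℚ) := by
  classical
  refine ⟨∑ f : V ⊕ Fin (M + 1) → Fin (Fintype.card (V ⊕ Fin (M + 1))),
    if IsRankPattern R (Fin.val ∘ f) then
      ∏ t : Fin M, choosePredPoly (f (.inr t.succ) - f (.inr t.castSucc) - 1) else 0,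
    fun k hk => ?_⟩
  rw [card_orderSolutions_eq_sum hR, Nat.cast_sum, eval_finsetSum]
  refine sum_congr rfl fun f _ => ?_
  rw [card_orderSolutionsWithRank hR hk]
  split_ifs
  · simp [eval_prod, eval_choosePredPoly _ hk]
  · simp

end OrderSolutions

section Rows

lemma List.SortedLE.getElem_le_iff_lt_countP {l : List ℕ} (hl : l.SortedLE) {p : ℕ}
    (hp : p < l.length) (t : ℕ) : l[p] ≤ t ↔ p < l.countP (· ≤ t) := by
  induction l generalizing p with
  | nil => simp at hp
  | cons b l ih =>
    rw [List.sortedLE_iff_pairwise, List.pairwise_cons] at hl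
    have hzero (hb : ¬ b ≤ t) : l.countP (· ≤ t) = 0 :=
      List.countP_eq_zero.2 fun x hx => by simpa using fun h => hb ((hl.1 x hx).trans h)
    rcases p with _ | p
    · by_cases hb : b ≤ t <;> simp [hb, hzero]
    · simp only [List.getElem_cons_succ, List.countP_cons]
      rw [ih hl.2.sortedLE (by simpa using hp)]
      by_cases hb : b ≤ t <;> simp [hb, hzero]

lemma List.SortedLE.eq_of_countP_le {l₁ l₂ : List ℕ} (h₁ : l₁.SortedLE) (h₂ : l₂.SortedLE)
    (h : ∀ t, l₁.countP (· ≤ t) = l₂.countP (· ≤ t)) : l₁ = l₂ := by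
  have hall (l : List ℕ) (B : ℕ) (hB : ∀ x ∈ l, x ≤ B) : l.countP (· ≤ B) = l.length :=
    List.countP_eq_length.2 (by simpa using hB)
  have hlen : l₁.length = l₂.length := by
    rw [← hall l₁ (l₁.sum + l₂.sum) fun x hx => (List.le_sum_of_mem hx).trans (by omega), h,
      hall l₂ _ fun x hx => (List.le_sum_of_mem hx).trans (by omega)]
  refine List.ext_getElem hlen fun p hp₁ hp₂ => le_antisymm ?_ ?_
  · rw [h₁.getElem_le_iff_lt_countP hp₁, h, ← h₂.getElem_le_iff_lt_countP hp₂]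
  · rw [h₂.getElem_le_iff_lt_countP hp₂, ← h, ← h₁.getElem_le_iff_lt_countP hp₁]

lemma column_strict_iff_interlace {o₁ o₂ : ℕ} {l₁ l₂ : List ℕ} (h₁ : l₁.SortedLE)
    (h₂ : l₂.SortedLE) (hpos : ∀ x ∈ l₂, 1 ≤ x) (ho : o₂ ≤ o₁)
    (hend : o₂ + l₂.length ≤ o₁ + l₁.length) :
    (∀ j, o₁ ≤ j → j < o₁ + l₁.length → o₂ ≤ j → j < o₂ + l₂.length →
      l₁.getD (j - o₁) 0 < l₂.getD (j - o₂) 0) ↔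
    ∀ t, o₂ + l₂.countP (· ≤ t + 1) ≤ o₁ + l₁.countP (· ≤ t) := by
  constructor
  · intro hcol t
    by_contra! hlt
    have hc : l₂.countP (· ≤ t + 1) ≤ l₂.length := List.countP_le_length
    set j := o₂ + l₂.countP (· ≤ t + 1) - 1
    have hj₂ : l₂[j - o₂]'(by omega) ≤ t + 1 :=
      (h₂.getElem_le_iff_lt_countP _ _).2 (by omega)
    have hj₁ : ¬ l₁[j - o₁]'(by omega) ≤ t := by
      rw [h₁.getElem_le_iff_lt_countP]
      omega
    have := hcol j (by omega) (by omega) (by omega) (by omega)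
    rw [List.getD_eq_getElem _ _ (by omega), List.getD_eq_getElem _ _ (by omega)] at this
    omega
  · intro hint j hj₁ hj₁' hj₂ hj₂'
    rw [List.getD_eq_getElem _ _ (by omega), List.getD_eq_getElem _ _ (by omega)]
    have he : 1 ≤ l₂[j - o₂] := hpos _ (List.getElem_mem _)
    have hcount : j - o₂ < l₂.countP (· ≤ l₂[j - o₂] - 1 + 1) :=
      (h₂.getElem_le_iff_lt_countP _ _).1 (by omega)
    have := hint (l₂[j - o₂] - 1)
    have : l₁[j - o₁] ≤ l₂[j - o₂] - 1 := (h₁.getElem_le_iff_lt_countP _ _).2 (by omega)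
    omega

end Rows

section RowOfCounts

def rowOfCounts (G : ℕ → ℕ) (m : ℕ) : List ℕ :=
  (List.range m).flatMap fun s => List.replicate (G (s + 1) - G s) (s + 1)

variable {G : ℕ → ℕ} {m : ℕ}

lemma rowOfCounts_succ (G : ℕ → ℕ) (m : ℕ) :
    rowOfCounts G (m + 1) = rowOfCounts G m ++ List.replicate (G (m + 1) - G m) (m + 1) := by
  simp [rowOfCounts, List.range_succ]

lemma mem_rowOfCounts {x : ℕ} (hx : x ∈ rowOfCounts G m) : 1 ≤ x ∧ x ≤ m := by
  simp only [rowOfCounts, List.mem_flatMap, List.mem_range, List.mem_replicate] at hx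
  omega

lemma sortedLE_rowOfCounts (G : ℕ → ℕ) (m : ℕ) : (rowOfCounts G m).SortedLE := by
  induction m with
  | zero => simp [rowOfCounts, List.sortedLE_iff_pairwise]
  | succ m ih =>
    rw [rowOfCounts_succ, List.sortedLE_iff_pairwise, List.pairwise_append]
    refine ⟨ih.pairwise, List.pairwise_replicate.2 (.inr le_rfl), fun a ha b hb => ?_⟩
    rw [List.eq_of_mem_replicate hb]
    exact (mem_rowOfCounts ha).2.trans (Nat.le_succ m)

lemma countP_le_rowOfCounts (hG : Monotone G) (m t : ℕ) :
    (rowOfCounts G m).countP (· ≤ t) = G (min t m) - G 0 := by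
  induction m with
  | zero => simp [rowOfCounts]
  | succ m ih =>
    rw [rowOfCounts_succ, List.countP_append, ih, List.countP_replicate]
    simp only [decide_eq_true_eq]
    rcases le_or_gt t m with htm | htm
    · rw [min_eq_left htm, min_eq_left (by omega), if_neg (by omega), add_zero]
    · rw [min_eq_right htm.le, min_eq_right htm, if_pos (Nat.succ_le_of_lt htm)]
      have h₀ : G 0 ≤ G m := hG (Nat.zero_le m)
      have h₁ : G m ≤ G (m + 1) := hG (Nat.le_add_right m 1)
      omega

end RowOfCounts

lemma IsPartition.const_mul {mu : ℕ → ℕ} (hm : IsPartition mu) (k : ℕ) :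
    IsPartition fun i => k * mu i := by
  obtain ⟨hmono, N, hN⟩ := hm
  exact ⟨fun i j hij => Nat.mul_le_mul_left k (hmono i j hij), N, fun i hi => by simp [hN i hi]⟩

section GelfandTsetlin

variable {n : ℕ} {mu nu : ℕ → ℕ} {k : ℕ}

/-- `g` is the Gelfand–Tsetlin pattern of a skew tableau of shape `kμ/kν` with entries at most
`n`: `g (t, i)` is the length of the part of row `i` (skew boxes included) with entries `≤ t`. -/
structure IsGTPattern (n : ℕ) (mu nu : ℕ → ℕ) (k : ℕ) (g : Fin (n + 1) × Fin n → ℕ) : Prop where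
  bottom : ∀ i, g (0, i) = k * nu i
  top : ∀ i, g (Fin.last n, i) = k * mu i
  le_succ : ∀ t i : Fin n, g (t.castSucc, i) ≤ g (t.succ, i)
  interlace : ∀ t i i' : Fin n, (i' : ℕ) = i + 1 → g (t.succ, i') ≤ g (t.castSucc, i)

def gtCount (g : Fin (n + 1) × Fin n → ℕ) (i : Fin n) (t : ℕ) : ℕ :=
  g (⟨min t n, Nat.lt_succ_of_le (min_le_right t n)⟩, i)

lemma gtCount_of_le {g : Fin (n + 1) × Fin n → ℕ} (i : Fin n) {t : ℕ} (ht : t ≤ n) :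
    gtCount g i t = g (⟨t, Nat.lt_succ_of_le ht⟩, i) := by
  simp [gtCount, min_eq_left ht]

lemma gtCount_of_ge {g : Fin (n + 1) × Fin n → ℕ} (i : Fin n) {t : ℕ} (ht : n ≤ t) :
    gtCount g i t = g (Fin.last n, i) := by
  simp [gtCount, min_eq_right ht, Fin.last]

lemma monotone_gtCount {g : Fin (n + 1) × Fin n → ℕ} (hg : IsGTPattern n mu nu k g)
    (i : Fin n) :
    Monotone (gtCount g i) := by
  have : Monotone fun t => g (t, i) := Fin.monotone_iff_le_succ.2 fun t => hg.le_succ t i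
  exact fun s t hst => this (Fin.mk_le_mk.2 (min_le_min_right n hst))

def tabOfGT (g : Fin (n + 1) × Fin n → ℕ) : SkewTab n where
  inner i := if h : i < n then g (0, ⟨i, h⟩) else 0
  row i := if h : i < n then rowOfCounts (gtCount g ⟨i, h⟩) n else []

def gtOfTab (T : SkewTab n) : Fin (n + 1) × Fin n → ℕ :=
  fun a => T.inner a.2 + (T.row a.2).countP (· ≤ (a.1 : ℕ))

lemma inner_add_countP_tabOfGT {g : Fin (n + 1) × Fin n → ℕ} (hg : IsGTPattern n mu nu k g)
    (i : Fin n) (t : ℕ) :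
    (tabOfGT g).inner i + ((tabOfGT g).row i).countP (· ≤ t) = gtCount g i t := by
  simp only [tabOfGT, i.2, dite_true, Fin.eta, countP_le_rowOfCounts (monotone_gtCount hg i)]
  have h0 : gtCount g i 0 = g (0, i) := gtCount_of_le i (Nat.zero_le n)
  have hmin : gtCount g i (min t n) = gtCount g i t := by simp [gtCount]
  have := monotone_gtCount hg i (Nat.zero_le (min t n))
  omega

lemma gtOfTab_mem {T : SkewTab n} (hT : T ∈ Tabs n (fun i => k * mu i) (fun i => k * nu i)) :
    IsGTPattern n mu nu k (gtOfTab T) := by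
  obtain ⟨⟨hin, hout, hsort, hbound, hcol⟩, hinner, houter⟩ := hT
  refine ⟨fun i => ?_, fun i => ?_, fun t i => ?_, fun t i i' hi => ?_⟩
  · rw [gtOfTab, Fin.val_zero, List.countP_eq_zero.2 fun x hx => by
      simpa using Nat.one_le_iff_ne_zero.1 (hbound i x hx).1, add_zero, hinner]
  · rw [gtOfTab, Fin.val_last, List.countP_eq_length.2 fun x hx => by
      simpa using (hbound i x hx).2]
    exact congrFun houter i
  · exact Nat.add_le_add_left (List.countP_mono_left fun x _ hx => by
      simp only [decide_eq_true_eq, Fin.val_castSucc, Fin.val_succ] at hx ⊢; omega) _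
  · have := (column_strict_iff_interlace (hsort i).sortedLE (hsort (i + 1)).sortedLE
      (fun x hx => (hbound _ x hx).1) (hin.1 _ _ (Nat.le_succ i)) (hout.1 _ _ (Nat.le_succ i))).1
      (hcol i) t
    simpa [gtOfTab, hi] using this

variable {g : Fin (n + 1) × Fin n → ℕ}

lemma inner_tabOfGT (hnlen : ∀ i, n ≤ i → nu i = 0) (hg : IsGTPattern n mu nu k g) :
    (tabOfGT g).inner = fun i => k * nu i := by
  funext i
  by_cases hi : i < n
  · simp [tabOfGT, hi, hg.bottom]
  · simp [tabOfGT, hi, hnlen i (not_lt.1 hi)]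

lemma outer_tabOfGT (hmlen : ∀ i, n ≤ i → mu i = 0) (hg : IsGTPattern n mu nu k g) :
    (tabOfGT g).outer = fun i => k * mu i := by
  funext i
  by_cases hi : i < n
  · have := inner_add_countP_tabOfGT hg ⟨i, hi⟩ n
    rw [List.countP_eq_length.2 fun x hx => ?_, gtCount_of_ge _ le_rfl, hg.top] at this
    · exact this
    · simp only [tabOfGT, hi, dite_true] at hx
      simpa using (mem_rowOfCounts hx).2
  · simp [SkewTab.outer, tabOfGT, hi, hmlen i (not_lt.1 hi)]

lemma tabOfGT_mem (hm : IsPartition mu) (hn : IsPartition nu) (hmlen : ∀ i, n ≤ i → mu i = 0)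
    (hnlen : ∀ i, n ≤ i → nu i = 0) (hg : IsGTPattern n mu nu k g) :
    tabOfGT g ∈ Tabs n (fun i => k * mu i) (fun i => k * nu i) := by
  have hinner := inner_tabOfGT hnlen hg
  have houter := outer_tabOfGT hmlen hg
  have hsort (i : ℕ) : ((tabOfGT g).row i).SortedLE := by
    by_cases hi : i < n
    · simpa [tabOfGT, hi] using sortedLE_rowOfCounts _ _
    · simp [tabOfGT, hi, List.sortedLE_iff_pairwise]
  have hbound (i : ℕ) (x : ℕ) (hx : x ∈ (tabOfGT g).row i) : 1 ≤ x ∧ x ≤ n := by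
    by_cases hi : i < n
    · simp only [tabOfGT, hi, dite_true] at hx
      exact mem_rowOfCounts hx
    · simp [tabOfGT, hi] at hx
  refine ⟨⟨hinner ▸ hn.const_mul k, houter ▸ hm.const_mul k, fun i => (hsort i).pairwise,
    hbound, fun i j h₁ h₂ h₃ h₄ => ?_⟩, hinner, houter⟩
  by_cases hi : i + 1 < n
  · refine (column_strict_iff_interlace (hsort i) (hsort (i + 1)) (fun x hx => (hbound _ x hx).1)
      ?_ ?_).2 (fun t => ?_) j h₁ h₂ h₃ h₄
    · rw [hinner]
      exact Nat.mul_le_mul_left k (hn.1 _ _ (Nat.le_succ i))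
    · change (tabOfGT g).outer (i + 1) ≤ (tabOfGT g).outer i
      rw [houter]
      exact Nat.mul_le_mul_left k (hm.1 _ _ (Nat.le_succ i))
    have h₁ := inner_add_countP_tabOfGT hg ⟨i + 1, hi⟩ (t + 1)
    have h₀ := inner_add_countP_tabOfGT hg ⟨i, by omega⟩ t
    simp only at h₀ h₁
    rw [h₀, h₁]
    rcases lt_or_ge t n with ht | ht
    · rw [gtCount_of_le _ ht.le, gtCount_of_le _ ht]
      exact hg.interlace ⟨t, ht⟩ _ _ rfl
    · rw [gtCount_of_ge _ ht, gtCount_of_ge _ (by omega), hg.top, hg.top]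
      exact Nat.mul_le_mul_left k (hm.1 _ _ (Nat.le_succ i))
  · simp [SkewTab.outer, tabOfGT, hi] at h₃ h₄

lemma gtOfTab_tabOfGT (hg : IsGTPattern n mu nu k g) : gtOfTab (tabOfGT g) = g := by
  funext ⟨t, i⟩
  exact (inner_add_countP_tabOfGT hg i t).trans (gtCount_of_le i (Fin.is_le t))

lemma SkewTab.ext_of_inner_row {T₁ T₂ : SkewTab n} (h₁ : T₁.inner = T₂.inner)
    (h₂ : T₁.row = T₂.row) : T₁ = T₂ := by
  cases T₁
  cases T₂
  congr

lemma tabOfGT_gtOfTab (hmlen : ∀ i, n ≤ i → mu i = 0) (hnlen : ∀ i, n ≤ i → nu i = 0)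
    {T : SkewTab n} (hT : T ∈ Tabs n (fun i => k * mu i) (fun i => k * nu i)) :
    tabOfGT (gtOfTab T) = T := by
  have hgt := gtOfTab_mem hT
  obtain ⟨⟨-, -, hsort, hbound, -⟩, hinner, houter⟩ := hT
  have hzero (i : ℕ) : (T.row i).countP (· ≤ 0) = 0 :=
    List.countP_eq_zero.2 fun x hx => by simpa using Nat.one_le_iff_ne_zero.1 (hbound i x hx).1
  refine SkewTab.ext_of_inner_row (funext fun i => ?_) (funext fun i => ?_)
  · by_cases hi : i < n
    · simp only [tabOfGT, hi, dite_true, hgt.bottom, hinner]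
    · simp [tabOfGT, hi, hinner, hnlen i (not_lt.1 hi)]
  · by_cases hi : i < n
    · simp only [tabOfGT, hi, dite_true]
      refine (sortedLE_rowOfCounts _ _).eq_of_countP_le (hsort i).sortedLE fun t => ?_
      rw [countP_le_rowOfCounts (monotone_gtCount hgt _)]
      simp only [gtCount, gtOfTab, Nat.zero_min, hzero, add_zero, Nat.add_sub_cancel_left]
      exact List.countP_congr fun x hx => by simp [(hbound i x hx).2]
    · have := congrFun houter i
      simp only [SkewTab.outer, hinner, hmlen i (not_lt.1 hi), hnlen i (not_lt.1 hi)] at this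
      simp [tabOfGT, hi, List.length_eq_zero_iff.1 (by omega : (T.row i).length = 0)]

def tabsEquivGTPatterns (hm : IsPartition mu) (hn : IsPartition nu)
    (hmlen : ∀ i, n ≤ i → mu i = 0) (hnlen : ∀ i, n ≤ i → nu i = 0) (k : ℕ) :
    Tabs n (fun i => k * mu i) (fun i => k * nu i) ≃ {g // IsGTPattern n mu nu k g} where
  toFun T := ⟨gtOfTab T.1, gtOfTab_mem T.2⟩
  invFun g := ⟨tabOfGT g.1, tabOfGT_mem hm hn hmlen hnlen g.2⟩
  left_inv T := Subtype.ext (tabOfGT_gtOfTab hmlen hnlen T.2)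
  right_inv g := Subtype.ext (gtOfTab_tabOfGT g.2)

end GelfandTsetlin

section GTRel

/-- The inequalities defining `IsGTPattern n mu nu k`, the pin `p` standing for `k * p`. -/
inductive GTRel (n : ℕ) (mu nu : ℕ → ℕ) (M : ℕ) :
    Fin (n + 1) × Fin n ⊕ Fin (M + 1) → Fin (n + 1) × Fin n ⊕ Fin (M + 1) → Prop
  | le_succ (t i : Fin n) : GTRel n mu nu M (.inl (t.castSucc, i)) (.inl (t.succ, i))
  | interlace (t i i' : Fin n) :
      (i' : ℕ) = i + 1 → GTRel n mu nu M (.inl (t.succ, i')) (.inl (t.castSucc, i))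
  | bottom_le (i : Fin n) (p : Fin (M + 1)) :
      (p : ℕ) = nu i → GTRel n mu nu M (.inl (0, i)) (.inr p)
  | le_bottom (i : Fin n) (p : Fin (M + 1)) :
      (p : ℕ) = nu i → GTRel n mu nu M (.inr p) (.inl (0, i))
  | top_le (i : Fin n) (p : Fin (M + 1)) :
      (p : ℕ) = mu i → GTRel n mu nu M (.inl (Fin.last n, i)) (.inr p)
  | le_top (i : Fin n) (p : Fin (M + 1)) :
      (p : ℕ) = mu i → GTRel n mu nu M (.inr p) (.inl (Fin.last n, i))

variable {n M : ℕ} {mu nu : ℕ → ℕ}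

lemma mem_orderSolutions_gtRel_iff (hM : ∀ i : Fin n, mu i ≤ M ∧ nu i ≤ M) {k : ℕ}
    {g : Fin (n + 1) × Fin n → ℕ} :
    g ∈ orderSolutions (GTRel n mu nu M) k ↔ IsGTPattern n mu nu k g := by
  constructor
  · intro hg
    refine ⟨fun i => ?_, fun i => ?_, fun t i => hg _ _ (.le_succ t i),
      fun t i i' h => hg _ _ (.interlace t i i' h)⟩
    · let p : Fin (M + 1) := ⟨nu i, Nat.lt_succ_of_le (hM i).2⟩
      exact le_antisymm (hg _ _ (.bottom_le i p rfl)) (hg _ _ (.le_bottom i p rfl))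
    · let p : Fin (M + 1) := ⟨mu i, Nat.lt_succ_of_le (hM i).1⟩
      exact le_antisymm (hg _ _ (.top_le i p rfl)) (hg _ _ (.le_top i p rfl))
  · rintro ⟨hbot, htop, hsucc, hint⟩ a b hab
    rcases hab with ⟨t, i⟩ | ⟨t, i, i', h⟩ | ⟨i, p, hp⟩ | ⟨i, p, hp⟩ | ⟨i, p, hp⟩ |
      ⟨i, p, hp⟩
    · exact hsucc t i
    · exact hint t i i' h
    all_goals simp [withPins, hbot, htop, hp]

lemma GTRel.exists_reflTransGen_pin (hM : ∀ i : Fin n, mu i ≤ M) (v : Fin (n + 1) × Fin n) :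
    ∃ p, ReflTransGen (GTRel n mu nu M) (.inl v) (.inr p) := by
  obtain ⟨t, i⟩ := v
  refine ⟨⟨mu i, Nat.lt_succ_of_le (hM i)⟩, ReflTransGen.tail ?_ (.top_le i _ rfl)⟩
  induction t using Fin.reverseInduction with
  | last => exact .refl
  | cast t ih => exact .head (.le_succ t i) ih

end GTRel

theorem card_stretched_tabs_polynomial_general (n : ℕ) (mu nu : ℕ → ℕ)
    (hm : IsPartition mu) (hn : IsPartition nu)
    (hmlen : ∀ i, n ≤ i → mu i = 0) (hnlen : ∀ i, n ≤ i → nu i = 0) :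
    ∃ p : Polynomial ℚ, ∀ k : ℕ, 0 < k →
      (Nat.card ↥(Tabs n (fun i => k * mu i) (fun i => k * nu i)) : ℚ) =
        p.eval (k : ℚ) := by
  have hM (i : Fin n) : mu i ≤ mu 0 + nu 0 ∧ nu i ≤ mu 0 + nu 0 :=
    ⟨(hm.1 0 i (Nat.zero_le _)).trans (Nat.le_add_right _ _),
      (hn.1 0 i (Nat.zero_le _)).trans (Nat.le_add_left _ _)⟩
  obtain ⟨p, hp⟩ := exists_polynomial_card_orderSolutions
    (GTRel.exists_reflTransGen_pin (nu := nu) fun i => (hM i).1)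
  refine ⟨p, fun k hk => ?_⟩
  rw [← hp k hk, Nat.card_congr ((tabsEquivGTPatterns hm hn hmlen hnlen k).trans
    (Equiv.subtypeEquivRight fun _ => (mem_orderSolutions_gtRel_iff hM).symm))]

/-- The number of SSYTs of the stretched shape `kμ/kν` with entries
in `{1,…,n}` is a polynomial function of the positive integer `k`. -/
theorem card_stretched_tabs_polynomial (n : ℕ) (mu nu : ℕ → ℕ)
    (hm : IsPartition mu) (hn : IsPartition nu)
    (hmlen : ∀ i, n ≤ i → mu i = 0) (hnlen : ∀ i, n ≤ i → nu i = 0)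
    (hnm : ∀ i, nu i ≤ mu i) :
    ∃ p : Polynomial ℚ, ∀ k : ℕ, 0 < k →
      (Nat.card ↥(Tabs n (fun i => k * mu i) (fun i => k * nu i)) : ℚ) =
        p.eval (k : ℚ) :=
  card_stretched_tabs_polynomial_general n mu nu hm hn hmlen hnlen
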